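/- arXiv:2309.10957 — 4 statements merged into one kernel-verified Lean document; each statement's English description precedes it below -/
import Mathlib

section
/- Let ρ be a d×d Hermitian matrix with tr(ρ) = 1. If ρ has at least one negative eigenvalue, then tr(ρ²) > 1/(d-1). Equivalently (contrapositive), if tr(ρ²) ≤ 1/(d-1) then ρ is positive semidefinite. -/
open Matrix ComplexOrder

/-- Real inequality: if the eigenvalues sum to 1 and one is negative, the sum of
squares exceeds 1/(d-1). -/
lemma insphere_aux {d : ℕ} (hd : 2 ≤ d) (f : Fin d → ℝ) (hsum : ∑ i, f i = 1)
    {j : Fin d} (hj : f j < 0) : 1 / ((d : ℝ) - 1) < ∑ i, f i ^ 2 := by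
  classical
  have hd1 : (1 : ℝ) ≤ (d : ℝ) - 1 := by
    have : (2 : ℝ) ≤ (d : ℝ) := by exact_mod_cast hd
    linarith
  have hcard : (Finset.univ.erase j).card = d - 1 := by
    simp [Finset.card_erase_of_mem]
  have hCS : (∑ i ∈ Finset.univ.erase j, f i) ^ 2 ≤
      ((d : ℝ) - 1) * ∑ i ∈ Finset.univ.erase j, f i ^ 2 := by
    have := sq_sum_le_card_mul_sum_sq (s := Finset.univ.erase j) (f := f)
    have hc : ((Finset.univ.erase j).card : ℝ) = (d : ℝ) - 1 := by
      rw [hcard]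
      have : (1 : ℕ) ≤ d := le_trans one_le_two hd
      push_cast [Nat.cast_sub this]
      ring
    rw [hc] at this
    exact this
  have hsplit : ∑ i, f i = f j + ∑ i ∈ Finset.univ.erase j, f i := by
    rw [← Finset.add_sum_erase _ _ (Finset.mem_univ j)]
  have hsplit2 : ∑ i, f i ^ 2 = f j ^ 2 + ∑ i ∈ Finset.univ.erase j, f i ^ 2 := by
    rw [← Finset.add_sum_erase _ _ (Finset.mem_univ j)]
  have hrest : ∑ i ∈ Finset.univ.erase j, f i = 1 - f j := by
    rw [hsplit] at hsum; linarith
  rw [hrest] at hCS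
  rw [hsplit2]
  rw [div_lt_iff₀ (by linarith : (0 : ℝ) < (d : ℝ) - 1)]
  nlinarith [sq_nonneg (f j), mul_pos (neg_pos.mpr hj)
    (lt_of_lt_of_le one_pos hd1 : (0:ℝ) < (d:ℝ) - 1)]

/-- For a d×d Hermitian matrix ρ with tr(ρ) = 1 (d ≥ 2): if ρ has a
negative eigenvalue then tr(ρ²) > 1/(d-1); equivalently, if tr(ρ²) ≤ 1/(d-1)
then ρ is positive semidefinite. -/
theorem insphere_psd {d : ℕ} (hd : 2 ≤ d) (ρ : Matrix (Fin d) (Fin d) ℂ)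
    (hherm : ρ.IsHermitian) (htr : ρ.trace = 1) :
    ((∃ i, hherm.eigenvalues i < 0) → 1 / ((d : ℝ) - 1) < ((ρ * ρ).trace).re) ∧
    (((ρ * ρ).trace).re ≤ 1 / ((d : ℝ) - 1) → ρ.PosSemidef) := by
  classical
  set U : Matrix (Fin d) (Fin d) ℂ := (hherm.eigenvectorUnitary : Matrix (Fin d) (Fin d) ℂ)
  set D : Matrix (Fin d) (Fin d) ℂ :=
    diagonal (RCLike.ofReal ∘ hherm.eigenvalues)
  have hspec : ρ = U * D * star U := hherm.spectral_theorem
  have hU : star U * U = 1 := (Matrix.mem_unitaryGroup_iff').mp hherm.eigenvectorUnitary.2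
  -- trace of ρ equals sum of eigenvalues
  have htrρ : ρ.trace = ∑ i, (hherm.eigenvalues i : ℂ) := by
    rw [congrArg Matrix.trace hspec, Matrix.trace_mul_cycle, hU, Matrix.one_mul]
    simp [D, trace_diagonal]
  have hsum : ∑ i, hherm.eigenvalues i = 1 := by
    have := congrArg Complex.re (htrρ.symm.trans htr)
    simpa [Complex.re_sum] using this
  -- trace of ρ² equals sum of squares of eigenvalues
  have htrρ2 : (ρ * ρ).trace = ∑ i, ((hherm.eigenvalues i : ℂ)) ^ 2 := by
    have : ρ * ρ = U * (D * D) * star U := by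
      rw [hspec]
      calc U * D * star U * (U * D * star U)
          = U * (D * ((star U * U) * (D * star U))) := by simp only [Matrix.mul_assoc]
        _ = U * (D * D) * star U := by rw [hU]; simp only [Matrix.mul_assoc, Matrix.one_mul]
    rw [this, Matrix.trace_mul_cycle, hU, Matrix.one_mul]
    simp [D, diagonal_mul_diagonal, trace_diagonal, sq]
  have htr2re : ((ρ * ρ).trace).re = ∑ i, (hherm.eigenvalues i) ^ 2 := by
    rw [htrρ2]
    simp [Complex.re_sum, ← Complex.ofReal_pow]
  have part1 : (∃ i, hherm.eigenvalues i < 0) → 1 / ((d : ℝ) - 1) < ((ρ * ρ).trace).re := by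
    rintro ⟨j, hj⟩
    rw [htr2re]
    exact insphere_aux hd _ hsum hj
  refine ⟨part1, fun hle => ?_⟩
  apply hherm.posSemidef_iff_eigenvalues_nonneg.mpr
  intro i
  by_contra hneg
  push_neg at hneg
  exact absurd hle (not_le.mpr (part1 ⟨i, hneg⟩))
end

section
/- Let ρ and ρ' be pure states on ℂ^d with rescaled Bloch vectors b, b' defined via ρ = (1/d)I + √((d-1)/(2d)) · Σ_a b_a Λ^a (so that b, b' are unit vectors). Then ⟨b, b'⟩ ≥ -1/(d-1), and equality holds if and only if tr(ρρ') = 0. -/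
open Matrix ComplexOrder

lemma bloch_trace_nonneg_of_psd {n : ℕ} {A : Matrix (Fin n) (Fin n) ℂ} (h : A.PosSemidef) :
    0 ≤ A.trace := by
  rw [Matrix.trace]
  apply Finset.sum_nonneg
  intro i _
  have := h.dotProduct_mulVec_nonneg (Pi.single i 1)
  simpa [dotProduct, Matrix.mulVec, Pi.single_apply, Finset.mul_sum] using this

/-- For pure states ρ, ρ' on ℂ^d with rescaled (unit) Bloch vectors b, b'
via ρ = (1/d)I + √((d-1)/(2d)) Σ_a b_a Λ^a, one has ⟨b, b'⟩ ≥ -1/(d-1), with equality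
iff tr(ρρ') = 0. -/
theorem bloch_angle_bound {d : ℕ} (hd : 2 ≤ d)
    (Λ : Fin (d ^ 2 - 1) → Matrix (Fin d) (Fin d) ℂ)
    (hΛherm : ∀ a, (Λ a).IsHermitian) (hΛtr : ∀ a, (Λ a).trace = 0)
    (hΛorth : ∀ a b, (Λ a * Λ b).trace = if a = b then 2 else 0)
    (ρ ρ' : Matrix (Fin d) (Fin d) ℂ) (b b' : Fin (d ^ 2 - 1) → ℝ)
    (hρ : ρ.PosSemidef) (hρ' : ρ'.PosSemidef)
    (hρtr : ρ.trace = 1) (hρ'tr : ρ'.trace = 1)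
    (hρpure : ρ * ρ = ρ) (hρ'pure : ρ' * ρ' = ρ')
    (hdecomp : ρ = ((d : ℂ))⁻¹ • 1
      + (Real.sqrt (((d : ℝ) - 1) / (2 * d)) : ℂ) • ∑ a, (b a : ℂ) • Λ a)
    (hdecomp' : ρ' = ((d : ℂ))⁻¹ • 1
      + (Real.sqrt (((d : ℝ) - 1) / (2 * d)) : ℂ) • ∑ a, (b' a : ℂ) • Λ a) :
    -(1 / ((d : ℝ) - 1)) ≤ ∑ a, b a * b' a ∧
    ((∑ a, b a * b' a = -(1 / ((d : ℝ) - 1))) ↔ (ρ * ρ').trace = 0) := by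
  have hd0 : (0:ℝ) < d := by positivity
  have hd1 : (1:ℝ) ≤ (d:ℝ) - 1 := by
    have : (2:ℝ) ≤ d := by exact_mod_cast hd
    linarith
  set c : ℝ := Real.sqrt (((d : ℝ) - 1) / (2 * d)) with hc
  have hc2 : c ^ 2 = ((d : ℝ) - 1) / (2 * d) := Real.sq_sqrt (by positivity)
  set B : Matrix (Fin d) (Fin d) ℂ := ∑ a, (b a : ℂ) • Λ a with hB
  set B' : Matrix (Fin d) (Fin d) ℂ := ∑ a, (b' a : ℂ) • Λ a with hB'
  set s : ℝ := ∑ a, b a * b' a with hs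
  have htB : B.trace = 0 := by simp [hB, trace_sum, trace_smul, hΛtr]
  have htB' : B'.trace = 0 := by simp [hB', trace_sum, trace_smul, hΛtr]
  have htBB' : (B * B').trace = 2 * (s : ℂ) := by
    rw [hB, hB', Finset.sum_mul]
    simp only [Finset.mul_sum, smul_mul_assoc, mul_smul_comm, trace_sum, trace_smul, smul_eq_mul,
      hΛorth, mul_ite, mul_zero, Finset.sum_ite_eq, Finset.mem_univ, if_true]
    rw [hs]
    push_cast
    rw [Finset.mul_sum]
    congr 1; ext a; ring
  -- compute the trace of ρ * ρ'
  have key : (ρ * ρ').trace = (((1 : ℝ) / d + (((d:ℝ) - 1) / d) * s : ℝ) : ℂ) := by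
    rw [hdecomp, hdecomp']
    simp only [add_mul, mul_add, trace_add, smul_mul_assoc, mul_smul_comm, trace_smul,
      smul_eq_mul, one_mul, mul_one, trace_one, htB, htB', htBB', mul_zero, add_zero,
      Fintype.card_fin]
    have hdC : (d : ℂ) ≠ 0 := by exact_mod_cast (by positivity : (d:ℝ) ≠ 0)
    have hcc : (c : ℂ) * (c : ℂ) = ((((d:ℝ) - 1) / (2 * d) : ℝ) : ℂ) := by
      rw [← Complex.ofReal_mul, ← sq, hc2]
    rw [show ((c:ℂ) * ((c:ℂ) * (2 * (s:ℂ)))) = ((c:ℂ) * (c:ℂ)) * (2 * (s:ℂ)) by ring, hcc]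
    push_cast
    field_simp
    ring
  have hnn : (0:ℂ) ≤ (ρ * ρ').trace := by
    have h1 : ρ * ρ' = ρ * (ρ' * ρ') := by rw [hρ'pure]
    have h2 : (ρ * (ρ' * ρ')).trace = (ρ' * ρ * ρ').trace := by
      rw [← mul_assoc, trace_mul_cycle]
    have h3 : (ρ' * ρ * ρ'ᴴ).PosSemidef := hρ.mul_mul_conjTranspose_same ρ'
    rw [hρ'.1.eq] at h3
    rw [h1, h2]
    exact bloch_trace_nonneg_of_psd h3
  rw [key] at hnn ⊢
  have hr : (0:ℝ) ≤ (1 : ℝ) / d + (((d:ℝ) - 1) / d) * s := by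
    rwa [← Complex.ofReal_zero, Complex.real_le_real] at hnn
  have heq : ((((1 : ℝ) / d + (((d:ℝ) - 1) / d) * s : ℝ)) : ℂ) = 0
      ↔ (1 : ℝ) / d + (((d:ℝ) - 1) / d) * s = 0 := by
    rw [← Complex.ofReal_zero]
    exact Complex.ofReal_inj
  constructor
  · have h1 : (0:ℝ) < (d:ℝ) - 1 := by linarith
    have hr2 : (0:ℝ) ≤ 1 + ((d:ℝ)-1)*s := by
      have h := mul_nonneg hd0.le hr
      have e : (d:ℝ) * ((1:ℝ)/d + (((d:ℝ)-1)/d)*s) = 1 + ((d:ℝ)-1)*s := by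
        field_simp
      rw [e] at h
      exact h
    rw [show -((1:ℝ)/((d:ℝ)-1)) = (-1)/((d:ℝ)-1) by ring, div_le_iff₀ h1]
    nlinarith [hr2]
  · rw [heq]
    constructor
    · intro h
      rw [h]
      field_simp
      ring
    · intro h
      have : s = -((1:ℝ)/d) / (((d:ℝ)-1)/d) := by
        field_simp at h ⊢
        linarith
      rw [this]
      field_simp
end

section
/- For density matrices ρ_u, ρ_v on ℂ^d with purity tr(ρ_u²) = tr(ρ_v²) = 1/(d-1) and Bloch vectors b_u, b_v normalized to be unit vectors (via ρ = (1/d)I + (1/√(2d(d-1))) b·Λ), the energy on the antisymmetric projector satisfies tr(h (ρ_u ⊗ ρ_v)) = (1/2)·((d-1)/d)·(1 - ⟨b_u, b_v⟩/(d-1)²), and hence tr(h (ρ_u ⊗ ρ_v)) ≤ ((d-1)² + 1)/(2d(d-1)). -/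
open Matrix Kronecker ComplexOrder

/-- For density matrices ρ_u, ρ_v on ℂ^d of purity 1/(d-1) with unit
Bloch vectors b_u, b_v (ρ = (1/d)I + (1/√(2d(d-1))) Σ_a b(a) Λ^a), the energy on the
antisymmetric projector h = (d-1)/(2d) I - (1/4) Σ_a Λ^a ⊗ Λ^a satisfies
tr(h (ρ_u ⊗ ρ_v)) = (1/2)((d-1)/d)(1 - ⟨b_u,b_v⟩/(d-1)²), and hence
tr(h (ρ_u ⊗ ρ_v)) ≤ ((d-1)² + 1)/(2d(d-1)). -/
theorem mixed_edge_energy {d : ℕ} (hd : 2 ≤ d)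
    (Λ : Fin (d ^ 2 - 1) → Matrix (Fin d) (Fin d) ℂ)
    (hΛherm : ∀ a, (Λ a).IsHermitian) (hΛtr : ∀ a, (Λ a).trace = 0)
    (hΛorth : ∀ a b, (Λ a * Λ b).trace = if a = b then 2 else 0)
    (h : Matrix (Fin d × Fin d) (Fin d × Fin d) ℂ)
    (hh : h = ((((d : ℂ) - 1) / (2 * d))) • 1 - (1 / 4 : ℂ) • ∑ a, Λ a ⊗ₖ Λ a)
    (ρu ρv : Matrix (Fin d) (Fin d) ℂ) (bu bv : Fin (d ^ 2 - 1) → ℝ)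
    (hρu : ρu.PosSemidef) (hρv : ρv.PosSemidef)
    (hρutr : ρu.trace = 1) (hρvtr : ρv.trace = 1)
    (hpurity_u : (ρu * ρu).trace = ((1 / ((d : ℝ) - 1) : ℝ) : ℂ))
    (hpurity_v : (ρv * ρv).trace = ((1 / ((d : ℝ) - 1) : ℝ) : ℂ))
    (hbu : ∑ a, (bu a) ^ 2 = 1) (hbv : ∑ a, (bv a) ^ 2 = 1)
    (hdecompu : ρu = ((d : ℂ))⁻¹ • 1
      + ((1 / Real.sqrt (2 * d * ((d : ℝ) - 1)) : ℝ) : ℂ) • ∑ a, (bu a : ℂ) • Λ a)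
    (hdecompv : ρv = ((d : ℂ))⁻¹ • 1
      + ((1 / Real.sqrt (2 * d * ((d : ℝ) - 1)) : ℝ) : ℂ) • ∑ a, (bv a : ℂ) • Λ a) :
    (h * (ρu ⊗ₖ ρv)).trace =
      ((1 / 2 * (((d : ℝ) - 1) / d)
        * (1 - (∑ a, bu a * bv a) / ((d : ℝ) - 1) ^ 2) : ℝ) : ℂ) ∧
    ((h * (ρu ⊗ₖ ρv)).trace).re ≤ (((d : ℝ) - 1) ^ 2 + 1) / (2 * d * ((d : ℝ) - 1)) := by

  set c : ℝ := 1 / Real.sqrt (2 * d * ((d : ℝ) - 1)) with hcdef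
  have hdR : (2:ℝ) ≤ (d:ℝ) := by exact_mod_cast hd
  have hd0 : (0:ℝ) < (d:ℝ) := by linarith
  have hd1 : (0:ℝ) < (d:ℝ) - 1 := by linarith
  have hc2 : c ^ 2 = 1 / (2 * d * ((d : ℝ) - 1)) := by
    rw [hcdef, div_pow, one_pow, Real.sq_sqrt (by positivity)]
  have key : ∀ (ρ : Matrix (Fin d) (Fin d) ℂ) (b : Fin (d ^ 2 - 1) → ℝ),
      ρ = ((d : ℂ))⁻¹ • 1 + ((c : ℝ) : ℂ) • ∑ a, (b a : ℂ) • Λ a →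
      ∀ a, (Λ a * ρ).trace = 2 * (c : ℂ) * (b a : ℂ) := by
    intro ρ b hρ a
    rw [hρ, Matrix.mul_add, Matrix.trace_add, Matrix.mul_smul, Matrix.mul_one,
      Matrix.trace_smul, hΛtr, Matrix.mul_smul, Matrix.trace_smul, Matrix.mul_sum]
    simp only [Matrix.mul_smul, Matrix.trace_sum, Matrix.trace_smul, hΛorth,
      smul_eq_mul, smul_zero, mul_ite, mul_zero]
    rw [Finset.sum_ite_eq Finset.univ a (fun i => (b i : ℂ) * 2)]
    simp
    ring
  have keyu := key ρu bu hdecompu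
  have keyv := key ρv bv hdecompv
  have htr : (h * (ρu ⊗ₖ ρv)).trace =
      (((d:ℂ) - 1) / (2 * d)) - ((c:ℂ)^2) * (∑ a, (bu a : ℂ) * (bv a : ℂ)) := by
    rw [hh, Matrix.sub_mul, Matrix.trace_sub, Matrix.smul_mul, Matrix.one_mul,
      Matrix.trace_smul, Matrix.smul_mul, Matrix.trace_smul, Matrix.sum_mul,
      Matrix.trace_sum]
    have h1 : (ρu ⊗ₖ ρv).trace = 1 := by
      rw [Matrix.trace_kronecker, hρutr, hρvtr, mul_one]
    rw [h1]
    have h2 : ∀ a : Fin (d ^ 2 - 1), ((Λ a ⊗ₖ Λ a) * (ρu ⊗ₖ ρv)).trace =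
        (2 * (c:ℂ) * (bu a : ℂ)) * (2 * (c:ℂ) * (bv a : ℂ)) := by
      intro a
      rw [← Matrix.mul_kronecker_mul, Matrix.trace_kronecker, keyu a, keyv a]
    simp only [h2, smul_eq_mul]
    simp only [mul_one, Finset.mul_sum]
    congr 1
    apply Finset.sum_congr rfl
    intro a _
    ring
  have hBge : (-1 : ℝ) ≤ ∑ a, bu a * bv a := by
    have hnn : (0:ℝ) ≤ ∑ a, (bu a + bv a) ^ 2 :=
      Finset.sum_nonneg (fun a _ => sq_nonneg _)
    have hexp : ∑ a, (bu a + bv a) ^ 2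
        = (∑ a, bu a ^ 2) + 2 * (∑ a, bu a * bv a) + ∑ a, bv a ^ 2 := by
      rw [Finset.mul_sum, ← Finset.sum_add_distrib, ← Finset.sum_add_distrib]
      apply Finset.sum_congr rfl
      intro a _
      ring
    rw [hexp, hbu, hbv] at hnn
    linarith
  have hd0' : (d:ℂ) ≠ 0 := by
    exact_mod_cast Nat.cast_ne_zero.mpr (by omega)
  have hd1' : (d:ℂ) - 1 ≠ 0 := by
    intro hE
    have h1 : (d:ℂ) = 1 := sub_eq_zero.mp hE
    have h2 : (d:ℝ) = 1 := by exact_mod_cast h1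
    linarith
  have hmain : (h * (ρu ⊗ₖ ρv)).trace =
      ((1 / 2 * (((d : ℝ) - 1) / d)
        * (1 - (∑ a, bu a * bv a) / ((d : ℝ) - 1) ^ 2) : ℝ) : ℂ) := by
    rw [htr]
    have hs : (∑ a, (bu a : ℂ) * (bv a : ℂ)) = ((∑ a, bu a * bv a : ℝ) : ℂ) := by
      push_cast; ring
    rw [hs]
    have hcc : ((c:ℂ))^2 = ((c^2 : ℝ) : ℂ) := by push_cast; ring
    rw [hcc, hc2]
    push_cast
    field_simp
  refine ⟨hmain, ?_⟩
  rw [hmain, Complex.ofReal_re]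
  set B : ℝ := ∑ a, bu a * bv a
  have hexp : 1 / 2 * (((d:ℝ) - 1) / d) * (1 - B / ((d:ℝ) - 1) ^ 2)
      = ((d:ℝ) - 1) / (2 * d) - B / (2 * d * ((d:ℝ) - 1)) := by
    field_simp
  have hexp2 : (((d:ℝ) - 1) ^ 2 + 1) / (2 * d * ((d:ℝ) - 1))
      = ((d:ℝ) - 1) / (2 * d) + 1 / (2 * d * ((d:ℝ) - 1)) := by
    field_simp
  rw [hexp, hexp2]
  have hpos : (0:ℝ) < 2 * d * ((d:ℝ) - 1) := by positivity
  have hle : -B / (2 * d * ((d:ℝ) - 1)) ≤ 1 / (2 * d * ((d:ℝ) - 1)) :=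
    by gcongr <;> linarith
  rw [neg_div] at hle
  linarith
end

section
/- Let ρ be a density matrix on ℂ^d ⊗ ℂ^d whose one-body marginals have no degree-one terms, i.e., tr(ρ (Λ^a ⊗ I)) = tr(ρ (I ⊗ Λ^a)) = 0 for all a. Then Σ_{a=1}^{d²-1} tr(ρ (Λ^a ⊗ Λ^a)) ≥ -2(d+1)/d. -/
open Matrix Kronecker ComplexOrder

noncomputable section

variable {d : ℕ}

def toE (M : Matrix (Fin d) (Fin d) ℂ) : EuclideanSpace ℂ (Fin d × Fin d) :=
  WithLp.toLp 2 (fun p : Fin d × Fin d => M p.1 p.2)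

lemma toE_apply (M : Matrix (Fin d) (Fin d) ℂ) (p : Fin d × Fin d) :
    toE M p = M p.1 p.2 := rfl

lemma eucl_sum_apply {ι : Type*} (s : Finset ι) (f : ι → EuclideanSpace ℂ (Fin d × Fin d))
    (p : Fin d × Fin d) : (∑ x ∈ s, f x) p = ∑ x ∈ s, f x p :=
  by rw [WithLp.ofLp_sum]; exact Finset.sum_apply p s _

lemma inner_toE (A B : Matrix (Fin d) (Fin d) ℂ) :
    (inner ℂ (toE A) (toE B) : ℂ) = (Aᴴ * B).trace := by
  simp only [toE, PiLp.inner_apply, PiLp.toLp_apply, RCLike.inner_apply, Matrix.trace, Matrix.diag,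
    Matrix.mul_apply, Matrix.conjTranspose_apply, Fintype.sum_prod_type]
  rw [Finset.sum_comm]
  simp [RCLike.star_def]
  exact Finset.sum_congr rfl fun _ _ => Finset.sum_congr rfl fun _ _ => mul_comm _ _

lemma trace_mul_std (A : Matrix (Fin d) (Fin d) ℂ) (l k : Fin d) :
    (A * Matrix.single l k 1).trace = A k l := by
  rw [Matrix.trace_mul_comm]
  simp [Matrix.trace, Matrix.diag, Matrix.mul_apply, Matrix.single, ite_and]

end

section
variable (hd : 1 ≤ d) (Λ : Fin (d ^ 2 - 1) → Matrix (Fin d) (Fin d) ℂ)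
    (hΛherm : ∀ a, (Λ a).IsHermitian) (hΛtr : ∀ a, (Λ a).trace = 0)
    (hΛorth : ∀ a b, (Λ a * Λ b).trace = if a = b then 2 else 0)

noncomputable def vfam : Option (Fin (d ^ 2 - 1)) → EuclideanSpace ℂ (Fin d × Fin d)
  | none => ((Real.sqrt d : ℂ))⁻¹ • toE 1
  | some a => ((Real.sqrt 2 : ℂ))⁻¹ • toE (Λ a)

include hd hΛherm hΛtr hΛorth in
lemma vfam_orthonormal : Orthonormal ℂ (vfam Λ) := by
  rw [orthonormal_iff_ite]
  have hd0 : (0:ℝ) < d := by positivity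
  rintro (_|a) (_|b) <;>
    simp only [vfam, inner_smul_left, inner_smul_right, inner_toE, map_inv₀,
      Complex.conj_ofReal]
  · rw [Matrix.conjTranspose_one, Matrix.one_mul, Matrix.trace_one]
    have : ((Real.sqrt d : ℂ)) * (Real.sqrt d : ℂ) = (d : ℂ) := by
      norm_cast
      rw [Real.mul_self_sqrt hd0.le]
    field_simp
    rw [sq, this]; simp
  · rw [Matrix.conjTranspose_one, Matrix.one_mul, hΛtr b]
    simp
  · rw [Matrix.mul_one, (hΛherm a).eq, hΛtr a]
    simp
  · rw [(hΛherm a).eq, hΛorth a b]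
    have h2 : ((Real.sqrt 2 : ℂ)) * (Real.sqrt 2 : ℂ) = 2 := by
      norm_cast
      rw [Real.mul_self_sqrt (by norm_num)]
    rcases eq_or_ne a b with rfl | hab
    · simp only [if_pos rfl, Option.some.injEq, if_pos rfl]
      field_simp
      rw [sq, h2]; simp
    · simp [hab]

include hd hΛherm hΛtr hΛorth in
lemma gellmann_complete (i j k l : Fin d) :
    ∑ a, Λ a i j * Λ a k l =
      2 * (if l = i ∧ k = j then 1 else 0)
        - (2 / d) * ((if k = l then 1 else 0) * (if i = j then 1 else 0)) := by
  classical
  have hv := vfam_orthonormal hd Λ hΛherm hΛtr hΛorth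
  have hd2 : 1 ≤ d ^ 2 := Nat.one_le_pow _ _ (by omega)
  have hcard : Fintype.card (Option (Fin (d ^ 2 - 1)))
      = Module.finrank ℂ (EuclideanSpace ℂ (Fin d × Fin d)) := by
    rw [finrank_euclideanSpace, Fintype.card_option, Fintype.card_fin, Fintype.card_prod,
      Fintype.card_fin]
    have : d ^ 2 = d * d := sq d
    omega
  let B := basisOfOrthonormalOfCardEqFinrank hv hcard
  have hB : ⇑B = vfam Λ := coe_basisOfOrthonormalOfCardEqFinrank hv hcard
  let ob := B.toOrthonormalBasis (hB ▸ hv)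
  have hob : ⇑ob = vfam Λ := by rw [Module.Basis.coe_toOrthonormalBasis, hB]
  have hx := ob.sum_repr (toE (Matrix.single l k 1))
  have hx2 := congrFun (congrArg WithLp.ofLp hx) (i, j)
  simp only [ob.repr_apply_apply, hob] at hx2
  rw [Fintype.sum_option] at hx2
  simp only [vfam, inner_smul_left, inner_toE, map_inv₀, Complex.conj_ofReal,
    Matrix.conjTranspose_one, Matrix.one_mul] at hx2
  have ht : (Matrix.single l k 1 : Matrix (Fin d) (Fin d) ℂ).trace
      = if k = l then 1 else 0 := by
    simp [Matrix.trace, Matrix.diag, Matrix.single, ite_and]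
  have htm : ∀ a, ((Λ a)ᴴ * Matrix.single l k 1).trace = Λ a k l := by
    intro a; rw [(hΛherm a).eq, trace_mul_std]
  simp only [ht, htm] at hx2
  simp only [PiLp.add_apply, eucl_sum_apply, PiLp.smul_apply, smul_eq_mul, toE_apply,
    Matrix.one_apply, Matrix.single, Matrix.of_apply] at hx2
  have h2 : ((Real.sqrt 2 : ℂ)) * (Real.sqrt 2 : ℂ) = 2 := by
    norm_cast; rw [Real.mul_self_sqrt (by norm_num)]
  have hdc : ((Real.sqrt d : ℂ)) * (Real.sqrt d : ℂ) = (d : ℂ) := by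
    norm_cast; rw [Real.mul_self_sqrt (by positivity)]
  have e1 : ((Real.sqrt d : ℂ)⁻¹ * if k = l then 1 else 0)
      * ((Real.sqrt d : ℂ)⁻¹ * if i = j then 1 else 0)
      = ((Real.sqrt d : ℂ) * (Real.sqrt d : ℂ))⁻¹
        * ((if k = l then (1:ℂ) else 0) * (if i = j then 1 else 0)) := by ring
  have e2 : ∀ a : Fin (d ^ 2 - 1), (Real.sqrt 2 : ℂ)⁻¹ * Λ a k l
      * ((Real.sqrt 2 : ℂ)⁻¹ * Λ a i j)
      = ((Real.sqrt 2 : ℂ) * (Real.sqrt 2 : ℂ))⁻¹ * (Λ a i j * Λ a k l) := by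
    intro a; ring
  rw [e1, hdc] at hx2
  simp only [e2, h2, ← Finset.mul_sum] at hx2
  linear_combination (2 : ℂ) * hx2

end

lemma psd_trace_nonneg {n : Type*} [Fintype n] [DecidableEq n] {M : Matrix n n ℂ}
    (hM : M.PosSemidef) : 0 ≤ M.trace := by
  rw [Matrix.trace]
  apply Finset.sum_nonneg
  intro i _
  exact hM.diag_nonneg

section swapF
variable (d : ℕ)

noncomputable def Fswap : Matrix (Fin d × Fin d) (Fin d × Fin d) ℂ :=
  Matrix.of fun p q => if p = (q.2, q.1) then 1 else 0

lemma Fswap_conjTranspose : (Fswap d)ᴴ = Fswap d := by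
  ext p q
  simp only [Fswap, Matrix.conjTranspose_apply, Matrix.of_apply, Prod.ext_iff]
  split_ifs with h1 h2 h2 <;> simp_all [eq_comm]

lemma Fswap_mul_Fswap : Fswap d * Fswap d = 1 := by
  ext p q
  rw [Matrix.mul_apply]
  simp [Fswap, Matrix.one_apply, Finset.sum_ite_eq']

lemma one_add_Fswap_posSemidef : (1 + Fswap d).PosSemidef := by
  set Q := ((Real.sqrt 2 : ℂ))⁻¹ • (1 + Fswap d) with hQ
  have h2 : ((Real.sqrt 2 : ℂ)) * (Real.sqrt 2 : ℂ) = 2 := by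
    norm_cast; rw [Real.mul_self_sqrt (by norm_num)]
  have hs2 : (Real.sqrt 2 : ℂ) ≠ 0 := by
    intro h; rw [h, mul_zero] at h2; norm_num at h2
  have hstar : star ((Real.sqrt 2 : ℂ))⁻¹ = ((Real.sqrt 2 : ℂ))⁻¹ := by
    rw [star_inv₀, RCLike.star_def, Complex.conj_ofReal]
  have hexp : ((1 : Matrix (Fin d × Fin d) (Fin d × Fin d) ℂ) + Fswap d) * (1 + Fswap d)
      = (2 : ℂ) • (1 + Fswap d) := by
    rw [Matrix.add_mul, Matrix.one_mul, Matrix.mul_add, Matrix.mul_one, Fswap_mul_Fswap,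
      two_smul]
    abel
  have hkey : Qᴴ * Q = 1 + Fswap d := by
    rw [hQ, Matrix.conjTranspose_smul, Matrix.conjTranspose_add, Matrix.conjTranspose_one,
      Fswap_conjTranspose, hstar, Matrix.smul_mul, Matrix.mul_smul, smul_smul, hexp,
      smul_smul, show ((Real.sqrt 2 : ℂ))⁻¹ * ((Real.sqrt 2 : ℂ))⁻¹ * 2 = 1 by
        rw [← mul_inv, h2]; norm_num, one_smul]
  exact hkey ▸ Matrix.posSemidef_conjTranspose_mul_self Q

end swapF

/-- Let ρ be a density matrix on ℂ^d ⊗ ℂ^d whose one-body marginals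
have no degree-one terms: tr(ρ (Λ^a ⊗ I)) = tr(ρ (I ⊗ Λ^a)) = 0 for all a, where
{Λ^a} are the generalized Gell-Mann matrices (traceless Hermitian,
tr(Λ^a Λ^b) = 2δ_{ab}). Then Σ_a tr(ρ (Λ^a ⊗ Λ^a)) ≥ -2(d+1)/d. -/
theorem frieze_jerrum_style_bound {d : ℕ} (hd : 2 ≤ d)
    (Λ : Fin (d ^ 2 - 1) → Matrix (Fin d) (Fin d) ℂ)
    (hΛherm : ∀ a, (Λ a).IsHermitian) (hΛtr : ∀ a, (Λ a).trace = 0)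
    (hΛorth : ∀ a b, (Λ a * Λ b).trace = if a = b then 2 else 0)
    (ρ : Matrix (Fin d × Fin d) (Fin d × Fin d) ℂ)
    (hρ : ρ.PosSemidef) (hρtr : ρ.trace = 1)
    (hmarg1 : ∀ a, (ρ * (Λ a ⊗ₖ (1 : Matrix (Fin d) (Fin d) ℂ))).trace = 0)
    (hmarg2 : ∀ a, (ρ * ((1 : Matrix (Fin d) (Fin d) ℂ) ⊗ₖ Λ a)).trace = 0) :
    -(2 * ((d : ℝ) + 1) / d) ≤ ∑ a, ((ρ * (Λ a ⊗ₖ Λ a)).trace).re := by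
  have hd1 : 1 ≤ d := by omega
  -- the sum of Kronecker products equals 2 F - (2/d) 1
  have hsum_mat : ∑ a, Λ a ⊗ₖ Λ a
      = (2 : ℂ) • Fswap d - ((2 / d : ℂ)) • 1 := by
    ext ⟨i, k⟩ ⟨j, l⟩
    rw [Matrix.sum_apply]
    simp only [Matrix.kroneckerMap_apply, Matrix.sub_apply, Matrix.smul_apply,
      Matrix.one_apply, Fswap, Matrix.of_apply, smul_eq_mul]
    rw [gellmann_complete hd1 Λ hΛherm hΛtr hΛorth i j k l]
    simp only [Prod.ext_iff]
    split_ifs <;> simp_all <;> try ring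
    all_goals aesop
  -- positivity of trace against 1 + F
  have key : 0 ≤ (ρ * (1 + Fswap d)).trace := by
    have hPsd := one_add_Fswap_posSemidef d
    obtain ⟨S, hSh, hQ⟩ : ∃ S : Matrix (Fin d × Fin d) (Fin d × Fin d) ℂ,
        S.IsHermitian ∧ 1 + Fswap d = S * S := by
      open scoped MatrixOrder in
      exact ⟨CFC.sqrt (1 + Fswap d), (CFC.sqrt_nonneg _).posSemidef.1,
        (CFC.sqrt_mul_sqrt_self _ hPsd.nonneg).symm⟩
    rw [hQ, ← Matrix.mul_assoc, Matrix.trace_mul_cycle]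
    have : (S * ρ * S) = S * ρ * Sᴴ := by
      rw [hSh.eq]
    rw [this]
    exact psd_trace_nonneg (hρ.mul_mul_conjTranspose_same S)
  -- compute the sum of traces
  have htr : ∑ a, (ρ * (Λ a ⊗ₖ Λ a)).trace
      = 2 * (ρ * Fswap d).trace - (2 / d : ℂ) := by
    rw [show ∑ a, (ρ * (Λ a ⊗ₖ Λ a)).trace = (ρ * ∑ a, Λ a ⊗ₖ Λ a).trace by
      rw [Finset.mul_sum, Matrix.trace_sum]]
    rw [hsum_mat, Matrix.mul_sub, Matrix.trace_sub, Matrix.mul_smul, Matrix.trace_smul,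
      Matrix.mul_smul, Matrix.mul_one, Matrix.trace_smul, hρtr]
    simp [smul_eq_mul]
  have key2 : 0 ≤ 1 + (ρ * Fswap d).trace := by
    rwa [Matrix.mul_add, Matrix.trace_add, Matrix.mul_one, hρtr] at key
  have hre : (-1 : ℝ) ≤ ((ρ * Fswap d).trace).re := by
    have := (Complex.le_def.mp key2).1
    simp only [Complex.zero_re, Complex.add_re, Complex.one_re] at this
    linarith
  have hgoal : ∑ a, ((ρ * (Λ a ⊗ₖ Λ a)).trace).re
      = 2 * ((ρ * Fswap d).trace).re - 2 / (d : ℝ) := by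
    rw [← Complex.re_sum, htr]
    rw [show (2 / (d : ℂ)) = ((2 / (d : ℝ) : ℝ) : ℂ) by push_cast; ring]
    simp [Complex.sub_re, Complex.mul_re]
  rw [hgoal]
  have hdR : (0 : ℝ) < d := by positivity
  have : -(2 * ((d : ℝ) + 1) / d) = -2 - 2 / d := by field_simp; ring
  rw [this]
  linarith
end
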